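/- Let v = (v₁, v₂, v₃) : ℝ³ → ℝ³ be a smooth vector field which is 2π-periodic in its first two variables, divergence-free (∂ₓv₁ + ∂_yv₂ + ∂_zv₃ = 0 everywhere), satisfies v₃(x, y, 1) = v₃(x, y, −1) = 0 for all x, y, and has zero horizontal means: ∫_Ω v₁ = ∫_Ω v₂ = 0, where Ω = [0,2π]²×[−1,1]. Then ∫_Ω |v|² ≤ ∫_Ω |∇v|², where |v|² = v₁² + v₂² + v₃² and |∇v|² is the squared Frobenius norm of the Jacobian matrix of v. -/

import Mathlib

open Real MeasureTheory

/-- Standard basis directions of ℝ × ℝ × ℝ. -/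
noncomputable def basis3 : Fin 3 → ℝ × ℝ × ℝ
  | 0 => (1, 0, 0)
  | 1 => (0, 1, 0)
  | 2 => (0, 0, 1)

/-- Partial derivative ∂ⱼ f of a scalar function on ℝ³. -/
noncomputable def pd (f : ℝ × ℝ × ℝ → ℝ) (j : Fin 3) (p : ℝ × ℝ × ℝ) : ℝ :=
  fderiv ℝ f p (basis3 j)

open intervalIntegral


/-- Cauchy–Schwarz for interval integrals of continuous functions. -/
lemma sq_int_le (g : ℝ → ℝ) {a b : ℝ} (hab : a ≤ b) (hg : Continuous g) :
    (∫ x in a..b, g x) ^ 2 ≤ (b - a) * ∫ x in a..b, (g x) ^ 2 := by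
  rcases eq_or_lt_of_le hab with rfl | hlt
  · simp
  · set S := ∫ x in a..b, g x with hS
    set Q := ∫ x in a..b, (g x) ^ 2 with hQ
    set c : ℝ := S / (b - a) with hc
    have hd : (0:ℝ) < b - a := by linarith
    have h0 : (0:ℝ) ≤ ∫ x in a..b, (g x - c) ^ 2 :=
      intervalIntegral.integral_nonneg hab (fun x _ => sq_nonneg _)
    have hint : (∫ x in a..b, (g x - c) ^ 2) = Q - 2 * c * S + (b - a) * c ^ 2 := by
      have h1 : (fun x => (g x - c) ^ 2) = fun x => (g x) ^ 2 - (2 * c) * g x + c ^ 2 := by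
        funext x; ring
      rw [h1]
      rw [intervalIntegral.integral_add ((by fun_prop : Continuous fun x => g x ^ 2 - 2 * c * g x).intervalIntegrable a b)
          (continuous_const.intervalIntegrable a b),
          intervalIntegral.integral_sub ((by fun_prop : Continuous fun x => g x ^ 2).intervalIntegrable a b)
          ((by fun_prop : Continuous fun x => 2 * c * g x).intervalIntegrable a b),
          intervalIntegral.integral_const_mul, intervalIntegral.integral_const]
      ring_nf
      rw [← hS, ← hQ]
      ring
    rw [hint] at h0
    have : c = S / (b - a) := hc
    rw [this] at h0
    have h2 : 2 * (S / (b - a)) * S = 2 * S ^ 2 / (b - a) := by ring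
    have h3 : (b - a) * (S / (b - a)) ^ 2 = S ^ 2 / (b - a) := by
      field_simp
    rw [h2, h3] at h0
    have h4 : S ^ 2 / (b - a) ≤ Q := by
      have : 2 * S ^ 2 / (b - a) - S ^ 2 / (b - a) = S ^ 2 / (b - a) := by ring
      linarith
    calc S ^ 2 = (b - a) * (S ^ 2 / (b - a)) := by field_simp
    _ ≤ (b - a) * Q := by nlinarith

lemma int_sq_nested (g' : ℝ → ℝ) (hg' : Continuous g') {a b c d : ℝ}
    (hac : a ≤ c) (hcd : c ≤ d) (hdb : d ≤ b) :
    ∫ x in c..d, (g' x) ^ 2 ≤ ∫ x in a..b, (g' x) ^ 2 :=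
  intervalIntegral.integral_mono_interval hac hcd hdb
    (Filter.Eventually.of_forall (fun x => sq_nonneg _))
    ((hg'.pow 2).intervalIntegrable a b)

/-- 1D Dirichlet Poincaré on [-1,1] with constant 1. -/
lemma dirichlet_poincare (g g' : ℝ → ℝ) (hg : ∀ x, HasDerivAt g (g' x) x)
    (hg' : Continuous g') (hm : g (-1) = 0) (hp : g 1 = 0) :
    ∫ z in (-1:ℝ)..1, (g z) ^ 2 ≤ ∫ z in (-1:ℝ)..1, (g' z) ^ 2 := by
  have hgc : Continuous g := by
    rw [continuous_iff_continuousAt]; exact fun x => (hg x).continuousAt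
  set I := ∫ z in (-1:ℝ)..1, (g' z) ^ 2 with hI
  have hI0 : 0 ≤ I := intervalIntegral.integral_nonneg (by norm_num) (fun x _ => sq_nonneg _)
  have hA : ∀ z ∈ Set.Icc (-1:ℝ) 0, (g z) ^ 2 ≤ (z + 1) * I := by
    intro z hz
    have hz1 : (-1:ℝ) ≤ z := hz.1
    have hftc : ∫ t in (-1:ℝ)..z, g' t = g z - g (-1) :=
      intervalIntegral.integral_eq_sub_of_hasDerivAt (fun t _ => hg t)
        (hg'.intervalIntegrable _ _)
    have h1 : (g z) ^ 2 = (∫ t in (-1:ℝ)..z, g' t) ^ 2 := by rw [hftc, hm]; ring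
    rw [h1]
    calc (∫ t in (-1:ℝ)..z, g' t) ^ 2 ≤ (z - (-1)) * ∫ t in (-1:ℝ)..z, (g' t) ^ 2 :=
          sq_int_le g' hz1 hg'
      _ ≤ (z + 1) * I := by
          have h := int_sq_nested g' hg' (le_refl (-1:ℝ)) hz1 (le_trans hz.2 (by norm_num : (0:ℝ) ≤ 1))
          have hz0 : (0:ℝ) ≤ z + 1 := by linarith
          have e : z - (-1) = z + 1 := by ring
          rw [e]
          exact mul_le_mul_of_nonneg_left h hz0
  have hB : ∀ z ∈ Set.Icc (0:ℝ) 1, (g z) ^ 2 ≤ (1 - z) * I := by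
    intro z hz
    have hz1 : z ≤ 1 := hz.2
    have hftc : ∫ t in z..(1:ℝ), g' t = g 1 - g z :=
      intervalIntegral.integral_eq_sub_of_hasDerivAt (fun t _ => hg t)
        (hg'.intervalIntegrable _ _)
    have h1 : (g z) ^ 2 = (∫ t in z..(1:ℝ), g' t) ^ 2 := by rw [hftc, hp]; ring
    rw [h1]
    calc (∫ t in z..(1:ℝ), g' t) ^ 2 ≤ (1 - z) * ∫ t in z..(1:ℝ), (g' t) ^ 2 :=
          sq_int_le g' hz1 hg'
      _ ≤ (1 - z) * I := by
          have h := int_sq_nested g' hg' (le_trans (by norm_num : (-1:ℝ) ≤ 0) hz.1) hz1 (le_refl (1:ℝ))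
          have hz0 : (0:ℝ) ≤ 1 - z := by linarith
          exact mul_le_mul_of_nonneg_left h hz0
  have hsplit : (∫ z in (-1:ℝ)..0, (g z) ^ 2) + ∫ z in (0:ℝ)..1, (g z) ^ 2
      = ∫ z in (-1:ℝ)..1, (g z) ^ 2 :=
    intervalIntegral.integral_add_adjacent_intervals
      ((hgc.pow 2).intervalIntegrable _ _) ((hgc.pow 2).intervalIntegrable _ _)
  have h1 : ∫ z in (-1:ℝ)..0, (g z) ^ 2 ≤ ∫ z in (-1:ℝ)..0, (z + 1) * I := by
    apply intervalIntegral.integral_mono_on (by norm_num)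
      ((hgc.pow 2).intervalIntegrable _ _)
      (((continuous_id.add continuous_const).mul continuous_const).intervalIntegrable _ _)
    exact hA
  have h2 : ∫ z in (0:ℝ)..1, (g z) ^ 2 ≤ ∫ z in (0:ℝ)..1, (1 - z) * I := by
    apply intervalIntegral.integral_mono_on (by norm_num)
      ((hgc.pow 2).intervalIntegrable _ _)
      (((continuous_const.sub continuous_id).mul continuous_const).intervalIntegrable _ _)
    exact hB
  have e1 : ∫ z in (-1:ℝ)..0, (z + 1) * I = I / 2 := by
    have hftc : ∫ z in (-1:ℝ)..0, (z + 1) * I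
        = ((0:ℝ)^2/2 + 0) * I - ((-1:ℝ)^2/2 + (-1)) * I := by
      have := intervalIntegral.integral_eq_sub_of_hasDerivAt
        (f := fun z : ℝ => (z^2/2 + z) * I) (f' := fun z : ℝ => (z + 1) * I)
        (a := (-1:ℝ)) (b := (0:ℝ))
        (fun t _ => by
          have h2 : HasDerivAt (fun z : ℝ => z^2/2 + z) (t + 1) t := by
            simpa using (((hasDerivAt_pow 2 t).div_const 2).fun_add (hasDerivAt_id t))
          simpa using h2.mul_const I)
        (((continuous_id.add continuous_const).mul continuous_const).intervalIntegrable _ _)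
      simpa using this
    rw [hftc]; ring
  have e2 : ∫ z in (0:ℝ)..1, (1 - z) * I = I / 2 := by
    have hftc : ∫ z in (0:ℝ)..1, (1 - z) * I
        = ((1:ℝ) - (1:ℝ)^2/2) * I - ((0:ℝ) - (0:ℝ)^2/2) * I := by
      have := intervalIntegral.integral_eq_sub_of_hasDerivAt
        (f := fun z : ℝ => (z - z^2/2) * I) (f' := fun z : ℝ => (1 - z) * I)
        (a := (0:ℝ)) (b := (1:ℝ))
        (fun t _ => by
          have h2 : HasDerivAt (fun z : ℝ => z - z^2/2) (1 - t) t := by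
            simpa using ((hasDerivAt_id t).fun_sub ((hasDerivAt_pow 2 t).div_const 2))
          simpa using h2.mul_const I)
        (((continuous_const.sub continuous_id).mul continuous_const).intervalIntegrable _ _)
      simpa using this
    rw [hftc]; ring
  linarith [h1, h2, hsplit, e1.le, e2.le]

/-- 1D mean-zero Poincaré on [-1,1] with constant 1 (true constant 2/3). -/
lemma meanzero_poincare (g g' : ℝ → ℝ) (hg : ∀ x, HasDerivAt g (g' x) x)
    (hg' : Continuous g') (hmean : ∫ z in (-1:ℝ)..1, g z = 0) :
    ∫ z in (-1:ℝ)..1, (g z) ^ 2 ≤ ∫ z in (-1:ℝ)..1, (g' z) ^ 2 := by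
  have hgc : Continuous g := by
    rw [continuous_iff_continuousAt]; exact fun x => (hg x).continuousAt
  set I := ∫ z in (-1:ℝ)..1, (g' z) ^ 2 with hI
  set C := ∫ z in (-1:ℝ)..1, (g z) ^ 2 with hC
  have hI0 : 0 ≤ I := intervalIntegral.integral_nonneg (by norm_num) (fun x _ => sq_nonneg _)
  -- pointwise bound
  have hP : ∀ z ∈ Set.Icc (-1:ℝ) 1, ∀ w ∈ Set.Icc (-1:ℝ) 1,
      (g z - g w) ^ 2 ≤ |z - w| * I := by
    have key : ∀ z ∈ Set.Icc (-1:ℝ) 1, ∀ w ∈ Set.Icc (-1:ℝ) 1, w ≤ z →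
        (g z - g w) ^ 2 ≤ |z - w| * I := by
      intro z hz w hw hwz
      have hftc : ∫ t in w..z, g' t = g z - g w :=
        intervalIntegral.integral_eq_sub_of_hasDerivAt (fun t _ => hg t)
          (hg'.intervalIntegrable _ _)
      rw [← hftc, abs_of_nonneg (by linarith : (0:ℝ) ≤ z - w)]
      calc (∫ t in w..z, g' t) ^ 2 ≤ (z - w) * ∫ t in w..z, (g' t) ^ 2 :=
            sq_int_le g' hwz hg'
        _ ≤ (z - w) * I :=
            mul_le_mul_of_nonneg_left (int_sq_nested g' hg' hw.1 hwz hz.2)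
              (by linarith : (0:ℝ) ≤ z - w)
    intro z hz w hw
    rcases le_total w z with h | h
    · exact key z hz w hw h
    · have := key w hw z hz h
      have e1 : (g z - g w) ^ 2 = (g w - g z) ^ 2 := by ring
      have e2 : |z - w| = |w - z| := abs_sub_comm z w
      rw [e1, e2]; exact this
  -- inner integral expansion
  have hinner : ∀ z : ℝ, ∫ w in (-1:ℝ)..1, (g z - g w) ^ 2 = 2 * (g z) ^ 2 + C := by
    intro z
    have hexp : (fun w => (g z - g w) ^ 2)
        = fun w => ((g z) ^ 2 - (2 * g z) * g w) + (g w) ^ 2 := by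
      funext w; ring
    rw [hexp, intervalIntegral.integral_add
        ((by fun_prop : Continuous fun w => g z ^ 2 - 2 * g z * g w).intervalIntegrable _ _)
        ((by fun_prop : Continuous fun w => g w ^ 2).intervalIntegrable _ _),
      intervalIntegral.integral_sub (continuous_const.intervalIntegrable _ _)
        ((by fun_prop : Continuous fun w => 2 * g z * g w).intervalIntegrable _ _),
      intervalIntegral.integral_const_mul, hmean, intervalIntegral.integral_const]
    simp only [smul_eq_mul, mul_zero]
    ring_nf
    rw [← hC]
  -- inner RHS computation
  have hrhs : ∀ z ∈ Set.Icc (-1:ℝ) 1, ∫ w in (-1:ℝ)..1, |z - w| * I = (z ^ 2 + 1) * I := by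
    intro z hz
    have habs : ∫ w in (-1:ℝ)..1, |z - w| = z ^ 2 + 1 := by
      have hsplit : (∫ w in (-1:ℝ)..z, |z - w|) + ∫ w in z..(1:ℝ), |z - w|
          = ∫ w in (-1:ℝ)..1, |z - w| :=
        intervalIntegral.integral_add_adjacent_intervals
          ((continuous_const.sub continuous_id).abs.intervalIntegrable _ _)
          ((continuous_const.sub continuous_id).abs.intervalIntegrable _ _)
      have h1 : ∫ w in (-1:ℝ)..z, |z - w| = ∫ w in (-1:ℝ)..z, (z - w) := by
        apply intervalIntegral.integral_congr
        intro w hw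
        rw [Set.uIcc_of_le hz.1] at hw
        exact abs_of_nonneg (by linarith [hw.2])
      have h2 : ∫ w in z..(1:ℝ), |z - w| = ∫ w in z..(1:ℝ), (w - z) := by
        apply intervalIntegral.integral_congr
        intro w hw
        rw [Set.uIcc_of_le hz.2] at hw
        show |z - w| = w - z
        rw [abs_sub_comm]
        exact abs_of_nonneg (by linarith [hw.1])
      have e1 : ∫ w in (-1:ℝ)..z, (z - w) = (z * z - z^2/2) - (z * (-1) - (-1:ℝ)^2/2) := by
        apply intervalIntegral.integral_eq_sub_of_hasDerivAt
          (f := fun w : ℝ => z * w - w ^ 2 / 2)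
        · intro t _
          have : HasDerivAt (fun w : ℝ => z * w - w ^ 2 / 2) (z - t) t := by
            simpa using ((hasDerivAt_id t).const_mul z).fun_sub ((hasDerivAt_pow 2 t).div_const 2)
          exact this
        · exact (continuous_const.sub continuous_id).intervalIntegrable _ _
      have e2 : ∫ w in z..(1:ℝ), (w - z) = ((1:ℝ)^2/2 - z * 1) - (z^2/2 - z * z) := by
        apply intervalIntegral.integral_eq_sub_of_hasDerivAt
          (f := fun w : ℝ => w ^ 2 / 2 - z * w)
        · intro t _
          have : HasDerivAt (fun w : ℝ => w ^ 2 / 2 - z * w) (t - z) t := by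
            simpa using ((hasDerivAt_pow 2 t).div_const 2).fun_sub ((hasDerivAt_id t).const_mul z)
          exact this
        · exact (continuous_id.sub continuous_const).intervalIntegrable _ _
      rw [h1, h2] at hsplit
      rw [e1, e2] at hsplit
      rw [← hsplit]; ring
    rw [intervalIntegral.integral_mul_const, habs]
  -- middle inequality for each z
  have hmid : ∀ z ∈ Set.Icc (-1:ℝ) 1, 2 * (g z) ^ 2 + C ≤ (z ^ 2 + 1) * I := by
    intro z hz
    rw [← hinner z, ← hrhs z hz]
    apply intervalIntegral.integral_mono_on (by norm_num)
      (((continuous_const.sub hgc).pow 2).intervalIntegrable _ _)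
      (((continuous_const.sub continuous_id).abs.mul continuous_const).intervalIntegrable _ _)
    exact fun w hw => hP z hz w hw
  -- integrate over z
  have houter : ∫ z in (-1:ℝ)..1, (2 * (g z) ^ 2 + C) ≤ ∫ z in (-1:ℝ)..1, (z ^ 2 + 1) * I := by
    apply intervalIntegral.integral_mono_on (by norm_num)
      (((continuous_const.mul (hgc.pow 2)).add continuous_const).intervalIntegrable _ _)
      ((((continuous_id.pow 2).add continuous_const).mul continuous_const).intervalIntegrable _ _)
    exact hmid
  have hL : ∫ z in (-1:ℝ)..1, (2 * (g z) ^ 2 + C) = 4 * C := by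
    rw [intervalIntegral.integral_add
        ((by fun_prop : Continuous fun z => 2 * g z ^ 2).intervalIntegrable _ _)
        (continuous_const.intervalIntegrable _ _),
      intervalIntegral.integral_const_mul, intervalIntegral.integral_const]
    simp only [smul_eq_mul]
    rw [← hC]; ring
  have hR : ∫ z in (-1:ℝ)..1, (z ^ 2 + 1) * I = (8/3) * I := by
    have e : ∫ z in (-1:ℝ)..1, (z ^ 2 + 1) * I
        = (((1:ℝ)^3/3 + 1) * I) - (((-1:ℝ)^3/3 + (-1)) * I) := by
      apply intervalIntegral.integral_eq_sub_of_hasDerivAt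
        (f := fun z : ℝ => (z ^ 3 / 3 + z) * I)
      · intro t _
        have h2 : HasDerivAt (fun z : ℝ => z ^ 3 / 3 + z) (t ^ 2 + 1) t := by
          have := ((hasDerivAt_pow 3 t).div_const 3).fun_add (hasDerivAt_id t)
          simpa using this
        simpa using h2.mul_const I
      · exact (((continuous_id.pow 2).add continuous_const).mul
          continuous_const).intervalIntegrable _ _
    rw [e]; ring
  rw [hL, hR] at houter
  linarith


section Wirt
open Complex


/-- Parseval for continuous 2π-periodic real functions. -/
lemma parseval_periodic (h : ℝ → ℝ) (hc : Continuous h) (hper : ∀ x, h (x + 2*π) = h x) :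
    HasSum (fun n : ℤ => ‖fourierCoeffOn Real.two_pi_pos (fun x => (h x : ℂ)) n‖ ^ 2)
      ((1/(2*π)) * ∫ x in (0:ℝ)..2*π, (h x) ^ 2) := by
  haveI hT : Fact (0 < 2*π) := ⟨Real.two_pi_pos⟩
  set H : ℝ → ℂ := fun x => (h x : ℂ) with hH
  have hHc : Continuous H := Complex.continuous_ofReal.comp hc
  have hend : H 0 = H (0 + 2*π) := by
    have := (hper 0).symm
    rw [zero_add] at this
    simp only [hH, zero_add]
    exact_mod_cast this
  set Gc : C(AddCircle (2*π), ℂ) :=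
    ⟨AddCircle.liftIco (2*π) 0 H, AddCircle.liftIco_continuous hend hHc.continuousOn⟩ with hGc
  set FLp : Lp ℂ 2 (@AddCircle.haarAddCircle (2*π) hT) :=
    ContinuousMap.toLp (E := ℂ) 2 AddCircle.haarAddCircle ℂ Gc with hFLp
  -- coefficients agree
  have hcoeff : ∀ n : ℤ, fourierCoeff (FLp : AddCircle (2*π) → ℂ) n
      = fourierCoeffOn Real.two_pi_pos H n := by
    intro n
    rw [fourierCoeff_toLp]
    have := fourierCoeff_liftIco_eq (T := 2*π) (a := (0:ℝ)) H n
    rw [show (Gc : AddCircle (2*π) → ℂ) = AddCircle.liftIco (2*π) 0 H from rfl, this]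
    simp only [zero_add]
  -- Parseval
  have hpars := tsum_sq_fourierCoeff FLp
  -- summability
  have hsum : Summable (fun n : ℤ => ‖fourierCoeffOn Real.two_pi_pos H n‖ ^ 2) := by
    have hmem := lp.memℓp ((@fourierBasis (2*π) hT).repr FLp)
    have := hmem.summable (by norm_num : (0:ℝ) < (2 : ENNReal).toReal)
    have he : ∀ n : ℤ, ‖((@fourierBasis (2*π) hT).repr FLp) n‖ ^ (2 : ENNReal).toReal
        = ‖fourierCoeffOn Real.two_pi_pos H n‖ ^ 2 := by
      intro n
      rw [fourierBasis_repr, hcoeff n]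
      rw [show ((2:ENNReal).toReal) = (2:ℝ) by norm_num, Real.rpow_two]
    exact (summable_congr he).mp this
  -- value of the integral
  have hval : (∫ t : AddCircle (2*π), ‖FLp t‖ ^ 2 ∂AddCircle.haarAddCircle)
      = (1/(2*π)) * ∫ x in (0:ℝ)..2*π, (h x) ^ 2 := by
    have h1 : (∫ t : AddCircle (2*π), ‖FLp t‖ ^ 2 ∂AddCircle.haarAddCircle)
        = ∫ t : AddCircle (2*π), ‖Gc t‖ ^ 2 ∂AddCircle.haarAddCircle := by
      apply MeasureTheory.integral_congr_ae
      filter_upwards [ContinuousMap.coeFn_toLp (p := 2) AddCircle.haarAddCircle (𝕜 := ℂ) Gc]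
        with t ht
      rw [ht]
    have h2 : (∫ t : AddCircle (2*π), ‖Gc t‖ ^ 2 ∂AddCircle.haarAddCircle)
        = (1/(2*π)) * ∫ t : AddCircle (2*π), ‖Gc t‖ ^ 2 := by
      rw [AddCircle.volume_eq_smul_haarAddCircle, MeasureTheory.integral_smul_measure,
        ENNReal.toReal_ofReal Real.two_pi_pos.le, smul_eq_mul]
      field_simp
    have h3 : (∫ t : AddCircle (2*π), ‖Gc t‖ ^ 2)
        = ∫ x in (0:ℝ)..(0 + 2*π), ‖Gc (x : AddCircle (2*π))‖ ^ 2 :=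
      (AddCircle.intervalIntegral_preimage (2*π) 0 (fun t => ‖Gc t‖ ^ 2)).symm
    have h4 : (∫ x in (0:ℝ)..(0 + 2*π), ‖Gc (x : AddCircle (2*π))‖ ^ 2)
        = ∫ x in (0:ℝ)..2*π, (h x) ^ 2 := by
      rw [zero_add]
      apply intervalIntegral.integral_congr_ae
      have hne : ∀ᵐ x : ℝ, x ≠ 2*π := by
        have : (volume ({2*π} : Set ℝ)) = 0 := measure_singleton _
        filter_upwards [measure_eq_zero_iff_ae_notMem.mp this] with x hx
        simpa using hx
      filter_upwards [hne] with x hx hxI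
      rw [Set.uIoc_of_le Real.two_pi_pos.le] at hxI
      have hxIco : x ∈ Set.Ico (0:ℝ) (0 + 2*π) := by
        constructor
        · linarith [hxI.1]
        · rw [zero_add]; exact lt_of_le_of_ne hxI.2 hx
      rw [show (Gc : AddCircle (2*π) → ℂ) = AddCircle.liftIco (2*π) 0 H from rfl]
      rw [AddCircle.liftIco_coe_apply hxIco]
      simp [hH, _root_.sq_abs]
    rw [h1, h2, h3, h4]
  rw [hval] at hpars
  have hfinal : (fun n : ℤ => ‖fourierCoeffOn Real.two_pi_pos H n‖ ^ 2)
      = fun n : ℤ => ‖fourierCoeff (FLp : AddCircle (2*π) → ℂ) n‖ ^ 2 := by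
    funext n; rw [hcoeff n]
  rw [hH] at hsum hfinal ⊢
  rw [hfinal] at hsum ⊢
  exact hsum.hasSum_iff.mpr hpars

/-- Wirtinger's inequality for 2π-periodic zero-mean C¹ functions. -/
lemma wirtinger (g g' : ℝ → ℝ) (hg : ∀ x, HasDerivAt g (g' x) x) (hg' : Continuous g')
    (hper : ∀ x, g (x + 2*π) = g x) (hmean : ∫ x in (0:ℝ)..2*π, g x = 0) :
    ∫ x in (0:ℝ)..2*π, (g x) ^ 2 ≤ ∫ x in (0:ℝ)..2*π, (g' x) ^ 2 := by
  haveI hT : Fact (0 < 2*π) := ⟨Real.two_pi_pos⟩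
  have hgc : Continuous g := by
    rw [continuous_iff_continuousAt]; exact fun x => (hg x).continuousAt
  have hper' : ∀ x, g' (x + 2*π) = g' x := by
    intro x
    have h1 : HasDerivAt (fun y => g (y + 2*π)) (g' (x + 2*π)) x := by
      have := (hg (x + 2*π)).comp x ((hasDerivAt_id x).add_const (2*π))
      simpa [Function.comp_def] using this
    have h2 : (fun y => g (y + 2*π)) = g := funext hper
    rw [h2] at h1
    exact h1.unique (hg x)
  set c : ℤ → ℂ := fun n => fourierCoeffOn Real.two_pi_pos (fun x => (g x : ℂ)) n with hc
  set d : ℤ → ℂ := fun n => fourierCoeffOn Real.two_pi_pos (fun x => (g' x : ℂ)) n with hd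
  have hc0 : c 0 = 0 := by
    rw [hc]
    simp only [fourierCoeffOn_eq_integral, neg_zero, fourier_zero, one_smul]
    rw [intervalIntegral.integral_ofReal, hmean]
    simp
  have hcd : ∀ n : ℤ, n ≠ 0 → ‖c n‖ ≤ ‖d n‖ := by
    intro n hn
    have key := fourierCoeffOn_of_hasDerivAt Real.two_pi_pos hn
      (f := fun x => (g x : ℂ)) (f' := fun x => (g' x : ℂ))
      (fun x _ => (hg x).ofReal_comp)
      ((Complex.continuous_ofReal.comp hg').intervalIntegrable _ _)
    have hgb : ((g (2*π) : ℂ)) - ((g 0 : ℂ)) = 0 := by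
      have := hper 0
      rw [zero_add] at this
      rw [this]; ring
    rw [hgb, mul_zero, zero_sub] at key
    show ‖fourierCoeffOn Real.two_pi_pos (fun x => ((g x : ℂ))) n‖
      ≤ ‖fourierCoeffOn Real.two_pi_pos (fun x => ((g' x : ℂ))) n‖
    rw [key]
    rw [norm_mul, norm_neg, norm_mul]
    have hnorm1 : ‖(1 : ℂ) / (-2 * ↑π * Complex.I * ↑n)‖ = 1 / (2 * π * |(n:ℝ)|) := by
      rw [norm_div, norm_one]
      congr 1
      simp [norm_mul, Complex.norm_I, Real.norm_eq_abs, abs_of_pos Real.pi_pos]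
    have hnorm2 : ‖(((2*π:ℝ)) : ℂ) - ((0:ℝ):ℂ)‖ = 2 * π := by
      simp [Real.norm_eq_abs, abs_of_pos Real.two_pi_pos, Real.pi_pos.le]
    rw [hnorm1, hnorm2]
    have hn1 : (1:ℝ) ≤ |(n:ℝ)| := by
      rw [← Int.cast_abs]
      exact_mod_cast Int.one_le_abs hn
    have hπ : (0:ℝ) < 2 * π := Real.two_pi_pos
    have habs : (0:ℝ) < |(n:ℝ)| := by linarith
    calc 1 / (2 * π * |(n:ℝ)|) * (2 * π * ‖fourierCoeffOn Real.two_pi_pos (fun x => ((g' x : ℂ))) n‖)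
        = ‖fourierCoeffOn Real.two_pi_pos (fun x => ((g' x : ℂ))) n‖ / |(n:ℝ)| := by
          field_simp
      _ ≤ ‖fourierCoeffOn Real.two_pi_pos (fun x => ((g' x : ℂ))) n‖ := by
          apply div_le_self (norm_nonneg _) hn1
  have hsq : ∀ n : ℤ, ‖c n‖ ^ 2 ≤ ‖d n‖ ^ 2 := by
    intro n
    rcases eq_or_ne n 0 with rfl | hn
    · rw [hc0]; simpa using sq_nonneg ‖d 0‖
    · exact pow_le_pow_left₀ (norm_nonneg _) (hcd n hn) 2
  have Pg := parseval_periodic g hgc hper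
  have Pg' := parseval_periodic g' hg' hper'
  have hle := Summable.tsum_le_tsum hsq Pg.summable Pg'.summable
  rw [Pg.tsum_eq, Pg'.tsum_eq] at hle
  have hπ : (0:ℝ) < 2 * π := Real.two_pi_pos
  have := mul_le_mul_of_nonneg_left hle hπ.le
  calc ∫ x in (0:ℝ)..2*π, (g x) ^ 2
      = (2*π) * ((1/(2*π)) * ∫ x in (0:ℝ)..2*π, (g x) ^ 2) := by field_simp
    _ ≤ (2*π) * ((1/(2*π)) * ∫ x in (0:ℝ)..2*π, (g' x) ^ 2) := this
    _ = ∫ x in (0:ℝ)..2*π, (g' x) ^ 2 := by field_simp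

end Wirt

section helpers

variable {f : ℝ × ℝ × ℝ → ℝ}

lemma pd_continuous (hf : ContDiff ℝ (⊤ : ℕ∞) f) (j : Fin 3) : Continuous (pd f j) := by
  exact (hf.continuous_fderiv (by simp)).clm_apply continuous_const

lemma hasDerivAt_slice0 (hf : ContDiff ℝ (⊤ : ℕ∞) f) (x y z : ℝ) :
    HasDerivAt (fun t => f (t, y, z)) (pd f 0 (x, y, z)) x := by
  have hF := (hf.differentiable (by simp) (x, y, z)).hasFDerivAt
  have hγ : HasDerivAt (fun t : ℝ => ((t, y, z) : ℝ × ℝ × ℝ)) ((1, 0, 0) : ℝ × ℝ × ℝ) x :=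
    (hasDerivAt_id x).prodMk ((hasDerivAt_const x y).prodMk (hasDerivAt_const x z))
  have := hF.comp_hasDerivAt x hγ
  simpa [pd, basis3, Function.comp_def] using this

lemma hasDerivAt_slice1 (hf : ContDiff ℝ (⊤ : ℕ∞) f) (x y z : ℝ) :
    HasDerivAt (fun t => f (x, t, z)) (pd f 1 (x, y, z)) y := by
  have hF := (hf.differentiable (by simp) (x, y, z)).hasFDerivAt
  have hγ : HasDerivAt (fun t : ℝ => ((x, t, z) : ℝ × ℝ × ℝ)) ((0, 1, 0) : ℝ × ℝ × ℝ) y :=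
    (hasDerivAt_const y x).prodMk ((hasDerivAt_id y).prodMk (hasDerivAt_const y z))
  have := hF.comp_hasDerivAt y hγ
  simpa [pd, basis3, Function.comp_def] using this

lemma hasDerivAt_slice2 (hf : ContDiff ℝ (⊤ : ℕ∞) f) (x y z : ℝ) :
    HasDerivAt (fun t => f (x, y, t)) (pd f 2 (x, y, z)) z := by
  have hF := (hf.differentiable (by simp) (x, y, z)).hasFDerivAt
  have hγ : HasDerivAt (fun t : ℝ => ((x, y, t) : ℝ × ℝ × ℝ)) ((0, 0, 1) : ℝ × ℝ × ℝ) z :=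
    (hasDerivAt_const z x).prodMk ((hasDerivAt_const z y).prodMk (hasDerivAt_id z))
  have := hF.comp_hasDerivAt z hγ
  simpa [pd, basis3, Function.comp_def] using this

lemma fderiv_shift (hf : ContDiff ℝ (⊤ : ℕ∞) f) (c : ℝ × ℝ × ℝ)
    (hper : ∀ q, f (q + c) = f q) (p : ℝ × ℝ × ℝ) :
    fderiv ℝ f (p + c) = fderiv ℝ f p := by
  have h1 : HasFDerivAt (fun q => f (q + c)) (fderiv ℝ f (p + c)) p := by
    have := ((hf.differentiable (by simp) (p + c)).hasFDerivAt).comp p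
      ((hasFDerivAt_id p).add_const c)
    simpa [Function.comp_def] using this
  have h2 : (fun q => f (q + c)) = f := funext hper
  rw [h2] at h1
  exact (h1.unique (hf.differentiable (by simp) p).hasFDerivAt)

lemma pd_per_x (hf : ContDiff ℝ (⊤ : ℕ∞) f)
    (hper : ∀ x y z : ℝ, f (x + 2 * π, y, z) = f (x, y, z)) (j : Fin 3) (x y z : ℝ) :
    pd f j (x + 2 * π, y, z) = pd f j (x, y, z) := by
  have hc : ∀ q : ℝ × ℝ × ℝ, f (q + ((2 * π : ℝ), (0:ℝ), (0:ℝ))) = f q := by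
    rintro ⟨a, b, c⟩
    show f (a + 2 * π, b + 0, c + 0) = f (a, b, c)
    rw [add_zero, add_zero]; exact hper a b c
  have := fderiv_shift hf _ hc (x, y, z)
  unfold pd
  rw [show ((x + 2 * π, y, z) : ℝ × ℝ × ℝ)
    = (x, y, z) + ((2 * π : ℝ), (0:ℝ), (0:ℝ)) by show _ = (x + 2*π, y + 0, z + 0); simp]
  rw [this]

lemma pd_per_y (hf : ContDiff ℝ (⊤ : ℕ∞) f)
    (hper : ∀ x y z : ℝ, f (x, y + 2 * π, z) = f (x, y, z)) (j : Fin 3) (x y z : ℝ) :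
    pd f j (x, y + 2 * π, z) = pd f j (x, y, z) := by
  have hc : ∀ q : ℝ × ℝ × ℝ, f (q + ((0:ℝ), (2 * π : ℝ), (0:ℝ))) = f q := by
    rintro ⟨a, b, c⟩
    show f (a + 0, b + 2 * π, c + 0) = f (a, b, c)
    rw [add_zero, add_zero]; exact hper a b c
  have := fderiv_shift hf _ hc (x, y, z)
  unfold pd
  rw [show ((x, y + 2 * π, z) : ℝ × ℝ × ℝ)
    = (x, y, z) + ((0:ℝ), (2 * π : ℝ), (0:ℝ)) by show _ = (x + 0, y + 2*π, z + 0); simp]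
  rw [this]

end helpers

section fubini

lemma swapII {F : ℝ → ℝ → ℝ} (hF : Continuous fun p : ℝ × ℝ => F p.1 p.2)
    {a b c d : ℝ} (hab : a ≤ b) (hcd : c ≤ d) :
    ∫ x in a..b, ∫ y in c..d, F x y = ∫ y in c..d, ∫ x in a..b, F x y := by
  have hint : Integrable (Function.uncurry F)
      ((volume.restrict (Set.Ioc a b)).prod (volume.restrict (Set.Ioc c d))) := by
    rw [Measure.prod_restrict]
    have h1 : IntegrableOn (fun p : ℝ × ℝ => F p.1 p.2) (Set.Icc a b ×ˢ Set.Icc c d)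
        (volume.prod volume) := by
      rw [← Measure.volume_eq_prod]
      exact hF.continuousOn.integrableOn_compact (isCompact_Icc.prod isCompact_Icc)
    exact h1.mono_set (Set.prod_mono Set.Ioc_subset_Icc_self Set.Ioc_subset_Icc_self)
  have hs := MeasureTheory.integral_integral_swap hint
  rw [integral_of_le hab, integral_of_le hcd]
  simp_rw [integral_of_le hcd, integral_of_le hab]
  exact hs

lemma swapII' {F : ℝ → ℝ → ℝ} (hF : Continuous fun p : ℝ × ℝ => F p.1 p.2)
    {a b c d : ℝ} (hab : a ≤ b) :
    ∫ x in a..b, ∫ y in c..d, F x y = ∫ y in c..d, ∫ x in a..b, F x y := by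
  rcases le_total c d with h | h
  · exact swapII hF hab h
  · calc ∫ x in a..b, ∫ y in c..d, F x y
        = ∫ x in a..b, -(∫ y in d..c, F x y) := by
          simp_rw [intervalIntegral.integral_symm d c]
      _ = -(∫ x in a..b, ∫ y in d..c, F x y) := intervalIntegral.integral_neg
      _ = -(∫ y in d..c, ∫ x in a..b, F x y) := by rw [swapII hF hab h]
      _ = ∫ y in c..d, ∫ x in a..b, F x y := (intervalIntegral.integral_symm d c).symm

lemma hasDerivAt_param (F F' : ℝ → ℝ → ℝ)
    (hFc : Continuous fun p : ℝ × ℝ => F p.1 p.2)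
    (hF'c : Continuous fun p : ℝ × ℝ => F' p.1 p.2)
    (hFd : ∀ x t, HasDerivAt (fun s => F x s) (F' x t) t)
    {a b : ℝ} (hab : a ≤ b) (t₀ : ℝ) :
    HasDerivAt (fun t => ∫ x in a..b, F x t) (∫ x in a..b, F' x t₀) t₀ := by
  set B : ℝ → ℝ := fun t => ∫ x in a..b, F' x t with hB
  have hBc : Continuous B := by
    have h1 : Continuous (Function.uncurry fun t x => F' x t) := hF'c.comp continuous_swap
    exact intervalIntegral.continuous_parametric_intervalIntegral_of_continuous' h1 a b
  have key : ∀ t, (∫ x in a..b, F x t) = (∫ x in a..b, F x t₀) + ∫ s in t₀..t, B s := by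
    intro t
    have hsub : ∀ x : ℝ, ∫ s in t₀..t, F' x s = F x t - F x t₀ := fun x =>
      intervalIntegral.integral_eq_sub_of_hasDerivAt (fun s _ => hFd x s)
        ((hF'c.comp (continuous_const.prodMk continuous_id)).intervalIntegrable _ _)
    have hcont2 : Continuous fun x => ∫ s in t₀..t, F' x s :=
      intervalIntegral.continuous_parametric_intervalIntegral_of_continuous' hF'c t₀ t
    calc ∫ x in a..b, F x t
        = ∫ x in a..b, (F x t₀ + ∫ s in t₀..t, F' x s) := by
          apply intervalIntegral.integral_congr
          intro x _
          show F x t = F x t₀ + ∫ (s : ℝ) in t₀..t, F' x s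
          rw [hsub x]; ring
      _ = (∫ x in a..b, F x t₀) + ∫ x in a..b, ∫ s in t₀..t, F' x s :=
          intervalIntegral.integral_add
            ((hFc.comp (continuous_id.prodMk continuous_const)).intervalIntegrable _ _)
            (hcont2.intervalIntegrable _ _)
      _ = (∫ x in a..b, F x t₀) + ∫ s in t₀..t, B s := by
          rw [swapII' (F := fun x s => F' x s) hF'c hab]
  have hfun : (fun t => ∫ x in a..b, F x t)
      = fun t => (∫ x in a..b, F x t₀) + ∫ s in t₀..t, B s := funext key
  rw [hfun]
  have hd : HasDerivAt (fun t => ∫ s in t₀..t, B s) (B t₀) t₀ :=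
    intervalIntegral.integral_hasDerivAt_right (hBc.intervalIntegrable _ _)
      (hBc.stronglyMeasurableAtFilter _ _) hBc.continuousAt
  simpa using hd.const_add (∫ x in a..b, F x t₀)

end fubini

section glue2

lemma expand_sq (g : ℝ → ℝ) (hg : Continuous g) {a b : ℝ} (c : ℝ) :
    ∫ x in a..b, (g x - c) ^ 2
      = (∫ x in a..b, (g x) ^ 2) - 2*c*(∫ x in a..b, g x) + (b - a)*c^2 := by
  have h1 : (fun x => (g x - c) ^ 2) = fun x => ((g x) ^ 2 - (2*c) * g x) + c^2 := by
    funext x; ring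
  rw [h1, intervalIntegral.integral_add
      ((by fun_prop : Continuous fun x => (g x) ^ 2 - (2*c) * g x).intervalIntegrable _ _)
      (continuous_const.intervalIntegrable _ _),
    intervalIntegral.integral_sub ((by fun_prop : Continuous fun x => (g x) ^ 2).intervalIntegrable _ _)
      ((by fun_prop : Continuous fun x => (2*c) * g x).intervalIntegrable _ _),
    intervalIntegral.integral_const_mul, intervalIntegral.integral_const, smul_eq_mul]

/-- Wirtinger with mean term. -/
lemma wirtinger_mean (g g' : ℝ → ℝ) (hg : ∀ x, HasDerivAt g (g' x) x) (hg' : Continuous g')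
    (hper : ∀ x, g (x + 2*π) = g x) :
    ∫ x in (0:ℝ)..2*π, (g x) ^ 2
      ≤ (∫ x in (0:ℝ)..2*π, (g' x) ^ 2) + (∫ x in (0:ℝ)..2*π, g x) ^ 2 / (2*π) := by
  have hπ : (0:ℝ) < 2*π := Real.two_pi_pos
  have hgc : Continuous g := by
    rw [continuous_iff_continuousAt]; exact fun x => (hg x).continuousAt
  set S := ∫ x in (0:ℝ)..2*π, g x with hS
  set c : ℝ := S / (2*π) with hc
  have hmean : ∫ x in (0:ℝ)..2*π, (g x - c) = 0 := by
    rw [intervalIntegral.integral_sub (hgc.intervalIntegrable _ _)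
      (continuous_const.intervalIntegrable _ _), intervalIntegral.integral_const, smul_eq_mul]
    rw [hc]; field_simp
    rw [sub_zero, mul_zero, ← hS, sub_self]
  have hW := wirtinger (fun x => g x - c) g' (fun x => (hg x).sub_const c) hg'
    (fun x => by simp [hper x]) hmean
  have hexp := expand_sq g hgc (a := 0) (b := 2*π) c
  have he : (∫ x in (0:ℝ)..2*π, (g x) ^ 2) - 2*c*S + (2*π - 0)*c^2
      = (∫ x in (0:ℝ)..2*π, (g x) ^ 2) - S^2/(2*π) := by
    rw [hc]; field_simp; ring
  rw [← hS] at hexp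
  rw [he] at hexp
  have : ∫ x in (0:ℝ)..2*π, (g x - c) ^ 2
      = ∫ x in (0:ℝ)..2*π, ((fun x => g x - c) x) ^ 2 := rfl
  rw [← this] at hW
  linarith [hW, hexp.symm.le, hexp.le]

lemma int_mono {u v : ℝ → ℝ} {a b : ℝ} (hab : a ≤ b) (hu : Continuous u) (hv : Continuous v)
    (h : ∀ t ∈ Set.Icc a b, u t ≤ v t) : ∫ t in a..b, u t ≤ ∫ t in a..b, v t :=
  intervalIntegral.integral_mono_on hab (hu.intervalIntegrable _ _)
    (hv.intervalIntegrable _ _) h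

lemma int_mono_add {u v w : ℝ → ℝ} {a b : ℝ} (hab : a ≤ b)
    (hu : Continuous u) (hv : Continuous v) (hw : Continuous w)
    (h : ∀ t ∈ Set.Icc a b, u t ≤ v t + w t / (2*π)) :
    ∫ t in a..b, u t ≤ (∫ t in a..b, v t) + (∫ t in a..b, w t) / (2*π) := by
  have h1 := int_mono hab hu (v := fun t => v t + w t / (2*π)) (hv.add (hw.div_const (2*π))) h
  rwa [intervalIntegral.integral_add (hv.intervalIntegrable _ _)
    ((hw.div_const (2*π)).intervalIntegrable _ _), intervalIntegral.integral_div] at h1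

lemma cont_intx {G : ℝ × ℝ × ℝ → ℝ} (hG : Continuous G) :
    Continuous fun q : ℝ × ℝ => ∫ x in (0:ℝ)..2*π, G (x, q.1, q.2) := by
  apply intervalIntegral.continuous_parametric_intervalIntegral_of_continuous'
  exact hG.comp (by fun_prop)

lemma cont_inty {G : ℝ → ℝ → ℝ} (hG : Continuous fun q : ℝ × ℝ => G q.1 q.2) :
    Continuous fun z => ∫ y in (0:ℝ)..2*π, G y z := by
  apply intervalIntegral.continuous_parametric_intervalIntegral_of_continuous'
  exact hG.comp continuous_swap

end glue2

/-- Horizontal component estimate. -/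
lemma comp_horiz (f : ℝ × ℝ × ℝ → ℝ) (hf : ContDiff ℝ (⊤ : ℕ∞) f)
    (hpx : ∀ x y z : ℝ, f (x + 2*π, y, z) = f (x, y, z))
    (hpy : ∀ x y z : ℝ, f (x, y + 2*π, z) = f (x, y, z))
    (hmean : ∫ z in (-1:ℝ)..1, ∫ y in (0:ℝ)..2*π, ∫ x in (0:ℝ)..2*π, f (x,y,z) = 0) :
    ∫ z in (-1:ℝ)..1, ∫ y in (0:ℝ)..2*π, ∫ x in (0:ℝ)..2*π, (f (x,y,z))^2
    ≤ (∫ z in (-1:ℝ)..1, ∫ y in (0:ℝ)..2*π, ∫ x in (0:ℝ)..2*π, (pd f 0 (x,y,z))^2)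
    + (∫ z in (-1:ℝ)..1, ∫ y in (0:ℝ)..2*π, ∫ x in (0:ℝ)..2*π, (pd f 1 (x,y,z))^2)
    + (∫ z in (-1:ℝ)..1, ∫ y in (0:ℝ)..2*π, ∫ x in (0:ℝ)..2*π, (pd f 2 (x,y,z))^2) := by
  have hπ : (0:ℝ) < 2*π := Real.two_pi_pos
  have h0π : (0:ℝ) ≤ 2*π := hπ.le
  have h11 : (-1:ℝ) ≤ 1 := by norm_num
  have hfc : Continuous f := hf.continuous
  have hp0 : Continuous (pd f 0) := pd_continuous hf 0
  have hp1 : Continuous (pd f 1) := pd_continuous hf 1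
  have hp2 : Continuous (pd f 2) := pd_continuous hf 2
  have hA : Continuous fun q : ℝ × ℝ => ∫ x in (0:ℝ)..2*π, f (x, q.1, q.2) := cont_intx hfc
  have hA1 : Continuous fun q : ℝ × ℝ => ∫ x in (0:ℝ)..2*π, pd f 1 (x, q.1, q.2) :=
    cont_intx hp1
  have hA2 : Continuous fun q : ℝ × ℝ => ∫ x in (0:ℝ)..2*π, pd f 2 (x, q.1, q.2) :=
    cont_intx hp2
  have hF2 : Continuous fun q : ℝ × ℝ => ∫ x in (0:ℝ)..2*π, (f (x, q.1, q.2))^2 :=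
    cont_intx (hfc.pow 2)
  have hP0 : Continuous fun q : ℝ × ℝ => ∫ x in (0:ℝ)..2*π, (pd f 0 (x, q.1, q.2))^2 :=
    cont_intx (hp0.pow 2)
  have hP1 : Continuous fun q : ℝ × ℝ => ∫ x in (0:ℝ)..2*π, (pd f 1 (x, q.1, q.2))^2 :=
    cont_intx (hp1.pow 2)
  have hP2 : Continuous fun q : ℝ × ℝ => ∫ x in (0:ℝ)..2*π, (pd f 2 (x, q.1, q.2))^2 :=
    cont_intx (hp2.pow 2)
  -- stage x
  have S1 : ∀ y z : ℝ, ∫ x in (0:ℝ)..2*π, (f (x,y,z))^2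
      ≤ (∫ x in (0:ℝ)..2*π, (pd f 0 (x,y,z))^2)
        + (∫ x in (0:ℝ)..2*π, f (x,y,z))^2 / (2*π) := fun y z =>
    wirtinger_mean (fun x => f (x,y,z)) (fun x => pd f 0 (x,y,z))
      (fun x => hasDerivAt_slice0 hf x y z)
      (hp0.comp (by fun_prop))
      (fun x => hpx x y z)
  -- derivatives of parametric integrals
  have hdA1 : ∀ y z : ℝ, HasDerivAt (fun t => ∫ x in (0:ℝ)..2*π, f (x, t, z))
      (∫ x in (0:ℝ)..2*π, pd f 1 (x, y, z)) y := fun y z =>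
    hasDerivAt_param (fun x t => f (x,t,z)) (fun x t => pd f 1 (x,t,z))
      (hfc.comp (by fun_prop)) (hp1.comp (by fun_prop))
      (fun x t => hasDerivAt_slice1 hf x t z) h0π y
  have hdA2 : ∀ y z : ℝ, HasDerivAt (fun t => ∫ x in (0:ℝ)..2*π, f (x, y, t))
      (∫ x in (0:ℝ)..2*π, pd f 2 (x, y, z)) z := fun y z =>
    hasDerivAt_param (fun x t => f (x,y,t)) (fun x t => pd f 2 (x,y,t))
      (hfc.comp (by fun_prop)) (hp2.comp (by fun_prop))
      (fun x t => hasDerivAt_slice2 hf x y t) h0π z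
  have hdM : ∀ z : ℝ, HasDerivAt (fun t => ∫ y in (0:ℝ)..2*π, ∫ x in (0:ℝ)..2*π, f (x, y, t))
      (∫ y in (0:ℝ)..2*π, ∫ x in (0:ℝ)..2*π, pd f 2 (x, y, z)) z := fun z =>
    hasDerivAt_param (fun y t => ∫ x in (0:ℝ)..2*π, f (x,y,t))
      (fun y t => ∫ x in (0:ℝ)..2*π, pd f 2 (x,y,t)) hA hA2
      (fun y t => hdA2 y t) h0π z
  -- periodicity of A in y
  have hApery : ∀ y z : ℝ, (∫ x in (0:ℝ)..2*π, f (x, y + 2*π, z))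
      = ∫ x in (0:ℝ)..2*π, f (x,y,z) :=
    fun y z => intervalIntegral.integral_congr (fun x _ => hpy x y z)
  -- stage y
  have S3 : ∀ z : ℝ, ∫ y in (0:ℝ)..2*π, (∫ x in (0:ℝ)..2*π, f (x,y,z))^2
      ≤ (∫ y in (0:ℝ)..2*π, (∫ x in (0:ℝ)..2*π, pd f 1 (x,y,z))^2)
        + (∫ y in (0:ℝ)..2*π, ∫ x in (0:ℝ)..2*π, f (x,y,z))^2 / (2*π) := fun z =>
    wirtinger_mean (fun y => ∫ x in (0:ℝ)..2*π, f (x,y,z))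
      (fun y => ∫ x in (0:ℝ)..2*π, pd f 1 (x,y,z))
      (fun y => hdA1 y z)
      (hA1.comp (continuous_id.prodMk continuous_const))
      (fun y => hApery y z)
  -- stage z
  have S5 : ∫ z in (-1:ℝ)..1, (∫ y in (0:ℝ)..2*π, ∫ x in (0:ℝ)..2*π, f (x,y,z))^2
      ≤ ∫ z in (-1:ℝ)..1, (∫ y in (0:ℝ)..2*π, ∫ x in (0:ℝ)..2*π, pd f 2 (x,y,z))^2 :=
    meanzero_poincare (fun z => ∫ y in (0:ℝ)..2*π, ∫ x in (0:ℝ)..2*π, f (x,y,z))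
      (fun z => ∫ y in (0:ℝ)..2*π, ∫ x in (0:ℝ)..2*π, pd f 2 (x,y,z))
      hdM (cont_inty hA2) hmean
  -- Cauchy-Schwarz pointwise
  have C1 : ∀ y z : ℝ, (∫ x in (0:ℝ)..2*π, pd f 1 (x,y,z))^2
      ≤ 2*π * ∫ x in (0:ℝ)..2*π, (pd f 1 (x,y,z))^2 := by
    intro y z
    have := sq_int_le (fun x => pd f 1 (x,y,z)) h0π (hp1.comp (by fun_prop))
    rwa [sub_zero] at this
  have C2 : ∀ y z : ℝ, (∫ x in (0:ℝ)..2*π, pd f 2 (x,y,z))^2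
      ≤ 2*π * ∫ x in (0:ℝ)..2*π, (pd f 2 (x,y,z))^2 := by
    intro y z
    have := sq_int_le (fun x => pd f 2 (x,y,z)) h0π (hp2.comp (by fun_prop))
    rwa [sub_zero] at this
  have C3 : ∀ z : ℝ, (∫ y in (0:ℝ)..2*π, ∫ x in (0:ℝ)..2*π, pd f 2 (x,y,z))^2
      ≤ 2*π * ∫ y in (0:ℝ)..2*π, (∫ x in (0:ℝ)..2*π, pd f 2 (x,y,z))^2 := by
    intro z
    have := sq_int_le (fun y => ∫ x in (0:ℝ)..2*π, pd f 2 (x,y,z)) h0π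
      (hA2.comp (continuous_id.prodMk continuous_const))
    rwa [sub_zero] at this
  -- integrated CS
  have D1 : ∀ z : ℝ, ∫ y in (0:ℝ)..2*π, (∫ x in (0:ℝ)..2*π, pd f 1 (x,y,z))^2
      ≤ 2*π * ∫ y in (0:ℝ)..2*π, ∫ x in (0:ℝ)..2*π, (pd f 1 (x,y,z))^2 := by
    intro z
    have := int_mono h0π (by exact (hA1.comp (continuous_id.prodMk continuous_const)).pow 2)
      (by exact continuous_const.mul (hP1.comp (continuous_id.prodMk continuous_const)))
      (fun y _ => C1 y z)
    rwa [intervalIntegral.integral_const_mul] at this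
  have D2 : ∀ z : ℝ, ∫ y in (0:ℝ)..2*π, (∫ x in (0:ℝ)..2*π, pd f 2 (x,y,z))^2
      ≤ 2*π * ∫ y in (0:ℝ)..2*π, ∫ x in (0:ℝ)..2*π, (pd f 2 (x,y,z))^2 := by
    intro z
    have := int_mono h0π (by exact (hA2.comp (continuous_id.prodMk continuous_const)).pow 2)
      (by exact continuous_const.mul (hP2.comp (continuous_id.prodMk continuous_const)))
      (fun y _ => C2 y z)
    rwa [intervalIntegral.integral_const_mul] at this
  have D3 : ∫ z in (-1:ℝ)..1, (∫ y in (0:ℝ)..2*π, ∫ x in (0:ℝ)..2*π, pd f 2 (x,y,z))^2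
      ≤ 2*π * ∫ z in (-1:ℝ)..1, ∫ y in (0:ℝ)..2*π,
        (∫ x in (0:ℝ)..2*π, pd f 2 (x,y,z))^2 := by
    have := int_mono h11 (by exact (cont_inty hA2).pow 2)
      (by exact continuous_const.mul (cont_inty (hA2.pow 2)))
      (fun z _ => C3 z)
    rwa [intervalIntegral.integral_const_mul] at this
  have D4 : ∫ z in (-1:ℝ)..1, ∫ y in (0:ℝ)..2*π, (∫ x in (0:ℝ)..2*π, pd f 2 (x,y,z))^2
      ≤ 2*π * ∫ z in (-1:ℝ)..1, ∫ y in (0:ℝ)..2*π, ∫ x in (0:ℝ)..2*π,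
        (pd f 2 (x,y,z))^2 := by
    have := int_mono h11 (by exact cont_inty (hA2.pow 2))
      (by exact continuous_const.mul (cont_inty hP2))
      (fun z _ => D2 z)
    rwa [intervalIntegral.integral_const_mul] at this
  -- assembly
  have T1 : ∫ z in (-1:ℝ)..1, ∫ y in (0:ℝ)..2*π, ∫ x in (0:ℝ)..2*π, (f (x,y,z))^2
      ≤ (∫ z in (-1:ℝ)..1, ∫ y in (0:ℝ)..2*π, ∫ x in (0:ℝ)..2*π, (pd f 0 (x,y,z))^2)
        + (∫ z in (-1:ℝ)..1, ∫ y in (0:ℝ)..2*π, (∫ x in (0:ℝ)..2*π, f (x,y,z))^2) / (2*π) := by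
    apply int_mono_add h11 (cont_inty hF2) (cont_inty hP0) (cont_inty (hA.pow 2))
    intro z _
    apply int_mono_add h0π (hF2.comp (continuous_id.prodMk continuous_const))
      (hP0.comp (continuous_id.prodMk continuous_const))
      ((hA.comp (continuous_id.prodMk continuous_const)).pow 2)
    intro y _
    exact S1 y z
  have T3 : ∫ z in (-1:ℝ)..1, ∫ y in (0:ℝ)..2*π, (∫ x in (0:ℝ)..2*π, f (x,y,z))^2
      ≤ 2*π * (∫ z in (-1:ℝ)..1, ∫ y in (0:ℝ)..2*π, ∫ x in (0:ℝ)..2*π, (pd f 1 (x,y,z))^2)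
        + (∫ z in (-1:ℝ)..1, (∫ y in (0:ℝ)..2*π, ∫ x in (0:ℝ)..2*π, f (x,y,z))^2) / (2*π) := by
    have hstep : ∀ z ∈ Set.Icc (-1:ℝ) 1,
        (∫ y in (0:ℝ)..2*π, (∫ x in (0:ℝ)..2*π, f (x,y,z))^2)
          ≤ (2*π * ∫ y in (0:ℝ)..2*π, ∫ x in (0:ℝ)..2*π, (pd f 1 (x,y,z))^2)
            + (∫ y in (0:ℝ)..2*π, ∫ x in (0:ℝ)..2*π, f (x,y,z))^2 / (2*π) := by
      intro z _
      have h1 := S3 z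
      have h2 := D1 z
      linarith
    have step := int_mono_add h11 (by exact cont_inty (hA.pow 2))
      (by exact continuous_const.mul (cont_inty hP1)) (by exact (cont_inty hA).pow 2) hstep
    rwa [intervalIntegral.integral_const_mul] at step
  have T5 : ∫ z in (-1:ℝ)..1, (∫ y in (0:ℝ)..2*π, ∫ x in (0:ℝ)..2*π, f (x,y,z))^2
      ≤ 2*π * (2*π * ∫ z in (-1:ℝ)..1, ∫ y in (0:ℝ)..2*π, ∫ x in (0:ℝ)..2*π,
        (pd f 2 (x,y,z))^2) := by
    have h1 := S5
    have h2 := D3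
    have h3 := D4
    nlinarith [hπ]
  -- final arithmetic
  set a := ∫ z in (-1:ℝ)..1, ∫ y in (0:ℝ)..2*π, ∫ x in (0:ℝ)..2*π, (f (x,y,z))^2
  set b0 := ∫ z in (-1:ℝ)..1, ∫ y in (0:ℝ)..2*π, ∫ x in (0:ℝ)..2*π, (pd f 0 (x,y,z))^2
  set b1 := ∫ z in (-1:ℝ)..1, ∫ y in (0:ℝ)..2*π, ∫ x in (0:ℝ)..2*π, (pd f 1 (x,y,z))^2
  set b2 := ∫ z in (-1:ℝ)..1, ∫ y in (0:ℝ)..2*π, ∫ x in (0:ℝ)..2*π, (pd f 2 (x,y,z))^2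
  set u := ∫ z in (-1:ℝ)..1, ∫ y in (0:ℝ)..2*π, (∫ x in (0:ℝ)..2*π, f (x,y,z))^2
  set m := ∫ z in (-1:ℝ)..1, (∫ y in (0:ℝ)..2*π, ∫ x in (0:ℝ)..2*π, f (x,y,z))^2
  have q3 : u / (2*π) ≤ b1 + m / ((2*π)*(2*π)) := by
    have h := (div_le_div_iff_of_pos_right hπ).mpr T3
    have e : (2*π * b1 + m/(2*π))/(2*π) = b1 + m / ((2*π)*(2*π)) := by
      field_simp
    rwa [e] at h
  have q5 : m / ((2*π)*(2*π)) ≤ b2 := by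
    rw [div_le_iff₀ (by positivity : (0:ℝ) < (2*π)*(2*π))]
    nlinarith [T5]
  calc a ≤ b0 + u/(2*π) := T1
    _ ≤ b0 + (b1 + m/((2*π)*(2*π))) := add_le_add le_rfl q3
    _ ≤ b0 + (b1 + b2) := add_le_add le_rfl (add_le_add le_rfl q5)
    _ = b0 + b1 + b2 := by ring

section vert

lemma cont_intz {G : ℝ × ℝ × ℝ → ℝ} (hG : Continuous G) :
    Continuous fun q : ℝ × ℝ => ∫ z in (-1:ℝ)..1, G (q.1, q.2, z) := by
  apply intervalIntegral.continuous_parametric_intervalIntegral_of_continuous'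
  exact hG.comp (by fun_prop)

lemma cont_int2 {H : ℝ × ℝ → ℝ} (hH : Continuous H) :
    Continuous fun x => ∫ y in (0:ℝ)..2*π, H (x, y) := by
  apply intervalIntegral.continuous_parametric_intervalIntegral_of_continuous'
  exact hH.comp (by fun_prop)

/-- Vertical component estimate (Dirichlet boundary conditions in z). -/
lemma comp_vert (f : ℝ × ℝ × ℝ → ℝ) (hf : ContDiff ℝ (⊤ : ℕ∞) f)
    (htop : ∀ x y : ℝ, f (x, y, 1) = 0) (hbot : ∀ x y : ℝ, f (x, y, -1) = 0) :
    ∫ x in (0:ℝ)..2*π, ∫ y in (0:ℝ)..2*π, ∫ z in (-1:ℝ)..1, (f (x,y,z))^2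
      ≤ ∫ x in (0:ℝ)..2*π, ∫ y in (0:ℝ)..2*π, ∫ z in (-1:ℝ)..1, (pd f 2 (x,y,z))^2 := by
  have h0π : (0:ℝ) ≤ 2*π := Real.two_pi_pos.le
  have hfc : Continuous f := hf.continuous
  have hp2 : Continuous (pd f 2) := pd_continuous hf 2
  have hQ : Continuous fun q : ℝ × ℝ => ∫ z in (-1:ℝ)..1, (f (q.1, q.2, z))^2 :=
    cont_intz (hfc.pow 2)
  have hR : Continuous fun q : ℝ × ℝ => ∫ z in (-1:ℝ)..1, (pd f 2 (q.1, q.2, z))^2 :=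
    cont_intz (hp2.pow 2)
  have P : ∀ x y : ℝ, ∫ z in (-1:ℝ)..1, (f (x,y,z))^2 ≤ ∫ z in (-1:ℝ)..1, (pd f 2 (x,y,z))^2 :=
    fun x y => dirichlet_poincare (fun z => f (x,y,z)) (fun z => pd f 2 (x,y,z))
      (fun z => hasDerivAt_slice2 hf x y z) (hp2.comp (by fun_prop))
      (hbot x y) (htop x y)
  apply int_mono h0π (cont_int2 hQ) (cont_int2 hR)
  intro x _
  apply int_mono h0π (hQ.comp (continuous_const.prodMk continuous_id))
    (hR.comp (continuous_const.prodMk continuous_id))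
  intro y _
  exact P x y

end vert

section convert

lemma icc_seg {h : ℝ → ℝ} {a b : ℝ} (hab : a ≤ b) :
    ∫ t in Set.Icc a b, h t = ∫ t in a..b, h t := by
  rw [intervalIntegral.integral_of_le hab, MeasureTheory.integral_Icc_eq_integral_Ioc]

lemma icc_to_iterated {F : ℝ × ℝ × ℝ → ℝ} (hF : Continuous F) :
    ∫ p in Set.Icc ((0:ℝ), (0:ℝ), (-1:ℝ)) (2*π, 2*π, (1:ℝ)), F p
      = ∫ x in (0:ℝ)..2*π, ∫ y in (0:ℝ)..2*π, ∫ z in (-1:ℝ)..1, F (x,y,z) := by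
  have h0π : (0:ℝ) ≤ 2*π := Real.two_pi_pos.le
  have hset : Set.Icc ((0:ℝ), (0:ℝ), (-1:ℝ)) (2*π, 2*π, (1:ℝ))
      = Set.Icc (0:ℝ) (2*π) ×ˢ (Set.Icc (0:ℝ) (2*π) ×ˢ Set.Icc (-1:ℝ) 1) := by
    rw [Set.Icc_prod_eq, Set.Icc_prod_eq]
  rw [hset]
  have hint : IntegrableOn F (Set.Icc (0:ℝ) (2*π) ×ˢ (Set.Icc (0:ℝ) (2*π) ×ˢ Set.Icc (-1:ℝ) 1))
      (volume.prod volume) := by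
    rw [← Measure.volume_eq_prod, ← hset]
    exact hF.continuousOn.integrableOn_compact isCompact_Icc
  rw [show (volume : Measure (ℝ × ℝ × ℝ)) = Measure.prod volume volume from Measure.volume_eq_prod _ _]
  rw [MeasureTheory.setIntegral_prod _ hint]
  have hinner : ∀ x : ℝ, ∫ q in Set.Icc (0:ℝ) (2*π) ×ˢ Set.Icc (-1:ℝ) 1, F (x, q)
      = ∫ y in (0:ℝ)..2*π, ∫ z in (-1:ℝ)..1, F (x,y,z) := by
    intro x
    have hint2 : IntegrableOn (fun q : ℝ × ℝ => F (x, q))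
        (Set.Icc (0:ℝ) (2*π) ×ˢ Set.Icc (-1:ℝ) 1) (volume.prod volume) := by
      rw [← Measure.volume_eq_prod]
      exact (hF.comp (by fun_prop : Continuous fun q : ℝ × ℝ => ((x, q) : ℝ×ℝ×ℝ))).continuousOn.integrableOn_compact
        (isCompact_Icc.prod isCompact_Icc)
    rw [show (volume : Measure (ℝ × ℝ)) = Measure.prod volume volume from Measure.volume_eq_prod _ _]
    rw [MeasureTheory.setIntegral_prod _ hint2]
    rw [icc_seg h0π]
    apply intervalIntegral.integral_congr
    intro y _
    exact icc_seg (by norm_num)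
  calc ∫ x in Set.Icc (0:ℝ) (2*π), ∫ q in Set.Icc (0:ℝ) (2*π) ×ˢ Set.Icc (-1:ℝ) 1, F (x, q)
      = ∫ x in Set.Icc (0:ℝ) (2*π), ∫ y in (0:ℝ)..2*π, ∫ z in (-1:ℝ)..1, F (x,y,z) := by
        apply MeasureTheory.setIntegral_congr_fun measurableSet_Icc
        intro x _
        exact hinner x
    _ = ∫ x in (0:ℝ)..2*π, ∫ y in (0:ℝ)..2*π, ∫ z in (-1:ℝ)..1, F (x,y,z) := icc_seg h0π

lemma cont_inty2 {F : ℝ × ℝ × ℝ → ℝ} (hF : Continuous F) :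
    Continuous fun q : ℝ × ℝ => ∫ y in (0:ℝ)..2*π, F (q.1, y, q.2) := by
  apply intervalIntegral.continuous_parametric_intervalIntegral_of_continuous'
  exact hF.comp (by fun_prop)

lemma reorder {F : ℝ × ℝ × ℝ → ℝ} (hF : Continuous F) :
    ∫ x in (0:ℝ)..2*π, ∫ y in (0:ℝ)..2*π, ∫ z in (-1:ℝ)..1, F (x,y,z)
      = ∫ z in (-1:ℝ)..1, ∫ y in (0:ℝ)..2*π, ∫ x in (0:ℝ)..2*π, F (x,y,z) := by
  have h0π : (0:ℝ) ≤ 2*π := Real.two_pi_pos.le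
  have h11 : (-1:ℝ) ≤ 1 := by norm_num
  calc ∫ x in (0:ℝ)..2*π, ∫ y in (0:ℝ)..2*π, ∫ z in (-1:ℝ)..1, F (x,y,z)
      = ∫ x in (0:ℝ)..2*π, ∫ z in (-1:ℝ)..1, ∫ y in (0:ℝ)..2*π, F (x,y,z) := by
        apply intervalIntegral.integral_congr
        intro x _
        exact swapII (F := fun y z => F (x,y,z)) (hF.comp (by fun_prop)) h0π h11
    _ = ∫ z in (-1:ℝ)..1, ∫ x in (0:ℝ)..2*π, ∫ y in (0:ℝ)..2*π, F (x,y,z) :=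
        swapII (F := fun x z => ∫ y in (0:ℝ)..2*π, F (x,y,z)) (cont_inty2 hF) h0π h11
    _ = ∫ z in (-1:ℝ)..1, ∫ y in (0:ℝ)..2*π, ∫ x in (0:ℝ)..2*π, F (x,y,z) := by
        apply intervalIntegral.integral_congr
        intro z _
        exact swapII (F := fun x y => F (x,y,z)) (hF.comp (by fun_prop)) h0π h0π

end convert

/-- Poincaré inequality ∫_Ω |v|² ≤ ∫_Ω |∇v|² for smooth doubly 2π-periodic
divergence-free fields tangent to the boundary z = ±1 with zero horizontal means. -/
theorem stmt_19 (v : Fin 3 → ℝ × ℝ × ℝ → ℝ)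
    (hsmooth : ∀ i, ContDiff ℝ (⊤ : ℕ∞) (v i))
    (hperx : ∀ i (x y z : ℝ), v i (x + 2 * π, y, z) = v i (x, y, z))
    (hpery : ∀ i (x y z : ℝ), v i (x, y + 2 * π, z) = v i (x, y, z))
    (hdiv : ∀ p : ℝ × ℝ × ℝ, pd (v 0) 0 p + pd (v 1) 1 p + pd (v 2) 2 p = 0)
    (hbc : ∀ x y : ℝ, v 2 (x, y, 1) = 0 ∧ v 2 (x, y, -1) = 0)
    (hmean₁ : ∫ p in Set.Icc ((0 : ℝ), (0 : ℝ), (-1 : ℝ)) (2 * π, 2 * π, (1 : ℝ)),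
      v 0 p = 0)
    (hmean₂ : ∫ p in Set.Icc ((0 : ℝ), (0 : ℝ), (-1 : ℝ)) (2 * π, 2 * π, (1 : ℝ)),
      v 1 p = 0) :
    ∫ p in Set.Icc ((0 : ℝ), (0 : ℝ), (-1 : ℝ)) (2 * π, 2 * π, (1 : ℝ)),
        ∑ i : Fin 3, (v i p) ^ 2
      ≤ ∫ p in Set.Icc ((0 : ℝ), (0 : ℝ), (-1 : ℝ)) (2 * π, 2 * π, (1 : ℝ)),
        ∑ i : Fin 3, ∑ j : Fin 3, (pd (v i) j p) ^ 2 := by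
  set S : Set (ℝ × ℝ × ℝ) := Set.Icc ((0 : ℝ), (0 : ℝ), (-1 : ℝ)) (2 * π, 2 * π, (1 : ℝ))
    with hSdef
  have hvc : ∀ i, Continuous (v i) := fun i => (hsmooth i).continuous
  have hpc : ∀ i j, Continuous (pd (v i) j) := fun i j => pd_continuous (hsmooth i) j
  have hI : ∀ (G : ℝ × ℝ × ℝ → ℝ), Continuous G → IntegrableOn G S volume := fun G hG =>
    hG.continuousOn.integrableOn_compact isCompact_Icc
  have conv2 : ∀ (G : ℝ × ℝ × ℝ → ℝ), Continuous G → (∫ p in S, G p)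
      = ∫ z in (-1:ℝ)..1, ∫ y in (0:ℝ)..2*π, ∫ x in (0:ℝ)..2*π, G (x,y,z) := fun G hG =>
    (icc_to_iterated hG).trans (reorder hG)
  -- LHS split
  have hLsplit : (∫ p in S, ∑ i : Fin 3, (v i p) ^ 2)
      = (∫ p in S, (v 0 p)^2) + (∫ p in S, (v 1 p)^2) + (∫ p in S, (v 2 p)^2) := by
    have h1 : (∫ p in S, ∑ i : Fin 3, (v i p) ^ 2)
        = ∑ i : Fin 3, ∫ p in S, (v i p) ^ 2 :=
      MeasureTheory.integral_finset_sum _ (fun i _ => hI _ ((hvc i).pow 2))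
    rw [h1, Fin.sum_univ_three]
  -- RHS split
  have hRsplit : (∫ p in S, ∑ i : Fin 3, ∑ j : Fin 3, (pd (v i) j p) ^ 2)
      = ∑ i : Fin 3, ∑ j : Fin 3, ∫ p in S, (pd (v i) j p) ^ 2 := by
    rw [MeasureTheory.integral_finset_sum _ (fun i _ => by
      apply hI _
      exact continuous_finset_sum _ (fun j _ => (hpc i j).pow 2))]
    exact Finset.sum_congr rfl (fun i _ =>
      MeasureTheory.integral_finset_sum _ (fun j _ => hI _ ((hpc i j).pow 2)))
  -- horizontal components
  have hhoriz : ∀ i, i = 0 ∨ i = 1 →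
      (∫ p in S, v i p) = 0 →
      (∫ p in S, (v i p)^2) ≤ (∫ p in S, (pd (v i) 0 p)^2) + (∫ p in S, (pd (v i) 1 p)^2)
        + (∫ p in S, (pd (v i) 2 p)^2) := by
    intro i _ hm
    have hm0 : ∫ z in (-1:ℝ)..1, ∫ y in (0:ℝ)..2*π, ∫ x in (0:ℝ)..2*π, v i (x,y,z) = 0 :=
      (conv2 (v i) (hvc i)).symm.trans hm
    have E : (∫ p in S, (v i p)^2)
        = ∫ z in (-1:ℝ)..1, ∫ y in (0:ℝ)..2*π, ∫ x in (0:ℝ)..2*π, (v i (x,y,z))^2 :=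
      conv2 (fun p => (v i p)^2) ((hvc i).pow 2)
    have E0 : (∫ p in S, (pd (v i) 0 p)^2)
        = ∫ z in (-1:ℝ)..1, ∫ y in (0:ℝ)..2*π, ∫ x in (0:ℝ)..2*π, (pd (v i) 0 (x,y,z))^2 :=
      conv2 (fun p => (pd (v i) 0 p)^2) ((hpc i 0).pow 2)
    have E1 : (∫ p in S, (pd (v i) 1 p)^2)
        = ∫ z in (-1:ℝ)..1, ∫ y in (0:ℝ)..2*π, ∫ x in (0:ℝ)..2*π, (pd (v i) 1 (x,y,z))^2 :=
      conv2 (fun p => (pd (v i) 1 p)^2) ((hpc i 1).pow 2)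
    have E2 : (∫ p in S, (pd (v i) 2 p)^2)
        = ∫ z in (-1:ℝ)..1, ∫ y in (0:ℝ)..2*π, ∫ x in (0:ℝ)..2*π, (pd (v i) 2 (x,y,z))^2 :=
      conv2 (fun p => (pd (v i) 2 p)^2) ((hpc i 2).pow 2)
    rw [E, E0, E1, E2]
    exact comp_horiz (v i) (hsmooth i) (hperx i) (hpery i) hm0
  -- vertical component
  have hvert : (∫ p in S, (v 2 p)^2) ≤ ∫ p in S, (pd (v 2) 2 p)^2 := by
    have E : (∫ p in S, (v 2 p)^2)
        = ∫ x in (0:ℝ)..2*π, ∫ y in (0:ℝ)..2*π, ∫ z in (-1:ℝ)..1, (v 2 (x,y,z))^2 :=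
      icc_to_iterated ((hvc 2).pow 2)
    have E2 : (∫ p in S, (pd (v 2) 2 p)^2)
        = ∫ x in (0:ℝ)..2*π, ∫ y in (0:ℝ)..2*π, ∫ z in (-1:ℝ)..1, (pd (v 2) 2 (x,y,z))^2 :=
      icc_to_iterated ((hpc 2 2).pow 2)
    rw [E, E2]
    exact comp_vert (v 2) (hsmooth 2) (fun x y => (hbc x y).1) (fun x y => (hbc x y).2)
  have hnn : ∀ i j, (0:ℝ) ≤ ∫ p in S, (pd (v i) j p)^2 := fun i j =>
    MeasureTheory.setIntegral_nonneg measurableSet_Icc (fun p _ => sq_nonneg _)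
  have h0 := hhoriz 0 (Or.inl rfl) hmean₁
  have h1 := hhoriz 1 (Or.inr rfl) hmean₂
  rw [hLsplit, hRsplit]
  simp only [Fin.sum_univ_three]
  linarith [h0, h1, hvert, hnn 2 0, hnn 2 1]
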